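/- arXiv:2605.30191 — 4 statements merged into one kernel-verified Lean document; each statement's English description precedes it below -/
import Mathlib

section
/- Let E = ℝ^ℝ with the product topology and let γ : [0,1] → E be defined by γ(t)(x) = 1 if x = t, and 0 otherwise. If K ⊆ [0,1] is compact and γ|_K is continuous, then K is finite. Consequently γ is not Lusin-measurable: there is no compact K with λ([0,1]\K) < 1 on which γ is continuous. -/
open MeasureTheory Set Filter Topology

section IndicatorCurve

variable {X M : Type*} [TopologicalSpace X] [TopologicalSpace M] [T1Space M]
  [Zero M] [One M] [NeZero (1 : M)] [DecidableEq X] {K : Set X}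

/-- The `x`-coordinate of `t ↦ Pi.single t 1` is nonzero only at `t = x`, so its continuity
at `x` forces `x` to be isolated in `K`. -/
theorem singleton_mem_nhdsWithin_of_continuousWithinAt_single {x : X}
    (h : ContinuousWithinAt (fun t : X => (Pi.single t (1 : M) : X → M)) K x) :
    {x} ∈ 𝓝[K] x := by
  have hcoord : ContinuousWithinAt (fun t : X => (Pi.single t (1 : M) : X → M) x) K x :=
    (continuous_apply x).continuousAt.comp_continuousWithinAt h
  have hne : {t : X | (Pi.single t (1 : M) : X → M) x ≠ 0} ∈ 𝓝[K] x :=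
    hcoord (isOpen_ne.mem_nhds (by simp))
  refine mem_of_superset hne fun t ht => ?_
  by_contra htx
  exact ht (Pi.single_eq_of_ne (Ne.symm htx) _)

theorem isDiscrete_of_continuousOn_single
    (h : ContinuousOn (fun t : X => (Pi.single t (1 : M) : X → M)) K) : IsDiscrete K :=
  .of_nhdsWithin fun x hx =>
    le_pure_iff.mpr (singleton_mem_nhdsWithin_of_continuousWithinAt_single (h x hx))

theorem IsCompact.finite_of_continuousOn_single (hK : IsCompact K)
    (h : ContinuousOn (fun t : X => (Pi.single t (1 : M) : X → M)) K) : K.Finite :=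
  hK.finite (isDiscrete_of_continuousOn_single h)

end IndicatorCurve

theorem stmt7 (γ : ℝ → (ℝ → ℝ))
    (hdef : ∀ t x, γ t x = if x = t then (1:ℝ) else 0) :
    (∀ K : Set ℝ, K ⊆ Icc 0 1 → IsCompact K → ContinuousOn γ K → K.Finite) ∧
    ¬ ∃ K : Set ℝ, K ⊆ Icc 0 1 ∧ IsCompact K ∧
        volume (Icc (0:ℝ) 1 \ K) < 1 ∧ ContinuousOn γ K := by
  classical
  have hγ : γ = fun t => Pi.single t 1 := by
    ext t x
    rw [hdef, Pi.single_apply]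
  have finite_of_continuousOn (K : Set ℝ) (hK : IsCompact K) (h : ContinuousOn γ K) :
      K.Finite :=
    hK.finite_of_continuousOn_single (hγ ▸ h)
  refine ⟨fun K _ => finite_of_continuousOn K, ?_⟩
  rintro ⟨K, -, hK, hvol, h⟩
  rw [measure_sdiff_null ((finite_of_continuousOn K hK h).measure_zero _), Real.volume_Icc] at hvol
  norm_num at hvol
end

section
/- Let E be a sequentially complete Hausdorff real locally convex space and (γₙ)ₙ a sequence of Lusin-measurable functions [0,1] → E. Suppose for every ε > 0 there is a compact H_ε ⊆ [0,1] with λ([0,1] \ H_ε) < ε such that each γₙ|_{H_ε} is continuous and for each continuous seminorm q there exists N with sup_{t ∈ H_ε} q(γₘ(t) − γₙ(t)) < ε for all m, n ≥ N. Then the pointwise limit γ(t) = lim_n γₙ(t) exists for almost every t ∈ [0,1], and the function γ (extended by 0 on the null set) is Lusin-measurable. -/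
/-!
Apply the hypothesis at the tolerances `ε / 2 ^ (j + 1)` and intersect the resulting compact sets:
this gives a compact `A ⊆ [0,1]` with `λ([0,1] \ A) ≤ ε` on which every `γₙ` is continuous and
`(γₙ)` is uniformly Cauchy for each continuous seminorm, hence for the uniformity of `E`, since
the continuous seminorms generate the topology of a locally convex space. By sequential
completeness `(γₙ)` converges on `A`, uniformly, so the limit is continuous on `A`; as `ε` is
arbitrary, the convergence also holds almost everywhere.
-/

open MeasureTheory Set Filter Topology

def LusinMeasurable {E : Type*} [TopologicalSpace E] (γ : ℝ → E) : Prop :=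
  ∀ ε : ℝ, 0 < ε → ∃ K : Set ℝ, K ⊆ Icc 0 1 ∧ IsCompact K ∧
    volume (Icc (0:ℝ) 1 \ K) ≤ ENNReal.ofReal ε ∧ ContinuousOn γ K

theorem uniformCauchySeqOn_of_seminorm_lt {𝕜 E ι α : Type*} [NormedField 𝕜] [AddCommGroup E]
    [Module 𝕜 E] [UniformSpace E] [IsUniformAddGroup E] [PolynormableSpace 𝕜 E]
    {F : ι → α → E} {l : Filter ι} {s : Set α}
    (h : ∀ q : Seminorm 𝕜 E, Continuous q → ∀ r > 0,
      ∀ᶠ mn in l ×ˢ l, ∀ x ∈ s, q (F mn.1 x - F mn.2 x) < r) :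
    UniformCauchySeqOn F l s := by
  intro u hu
  obtain ⟨⟨S, r⟩, hr, hsub⟩ := ((PolynormableSpace.withSeminorms 𝕜 E).hasBasis_zero_ball.comap
    (fun x : E × E => x.2 - x.1)).mem_iff.1 (uniformity_eq_comap_nhds_zero E ▸ hu)
  filter_upwards [(S.eventually_all).2 fun q _ => h q q.2 r hr] with mn hmn x hx
  refine hsub ?_
  simp only [mem_preimage, Seminorm.mem_ball_zero]
  refine Seminorm.finset_sup_apply_lt hr fun q hq => ?_
  rw [map_sub_rev]
  exact hmn q hq x hx

theorem ae_restrict_of_forall_exists_diff_le {α : Type*} [MeasurableSpace α] {μ : Measure α}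
    {s : Set α} (hs : MeasurableSet s) {p : α → Prop}
    (h : ∀ ε : ℝ, 0 < ε → ∃ A, μ (s \ A) ≤ ENNReal.ofReal ε ∧ ∀ x ∈ A, p x) :
    ∀ᵐ x ∂μ.restrict s, p x := by
  rw [ae_restrict_iff' hs, ae_iff]
  refine nonpos_iff_eq_zero.1 (ENNReal.le_of_forall_pos_le_add fun ε hε _ => ?_)
  obtain ⟨A, hAμ, hA⟩ := h ε hε
  calc μ {x | ¬(x ∈ s → p x)} ≤ μ (s \ A) :=
        measure_mono fun x hx => (Classical.not_imp.1 hx).imp_right fun hpx hxA => hpx (hA x hxA)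
    _ ≤ 0 + ε := by simpa using hAμ

theorem exists_isCompact_uniformCauchySeqOn {𝕜 E α : Type*} [NormedField 𝕜] [AddCommGroup E]
    [Module 𝕜 E] [UniformSpace E] [IsUniformAddGroup E] [PolynormableSpace 𝕜 E]
    [TopologicalSpace α] [T2Space α] [MeasurableSpace α] {μ : Measure α} {s : Set α}
    {F : ℕ → α → E}
    (h : ∀ ε : ℝ, 0 < ε → ∃ H ⊆ s, IsCompact H ∧ μ (s \ H) < ENNReal.ofReal ε ∧
      (∀ n, ContinuousOn (F n) H) ∧
      ∀ q : Seminorm 𝕜 E, Continuous q → ∃ N : ℕ, ∀ m ≥ N, ∀ n ≥ N,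
        ∀ t ∈ H, q (F m t - F n t) < ε)
    {ε : ℝ} (hε : 0 < ε) :
    ∃ A ⊆ s, IsCompact A ∧ μ (s \ A) ≤ ENNReal.ofReal ε ∧ (∀ n, ContinuousOn (F n) A) ∧
      UniformCauchySeqOn F atTop A := by
  set δ : ℕ → ℝ := fun j => ε / 2 / 2 ^ j
  choose H hHs hHc hHμ hHcont hHq using fun j => h (δ j) (by positivity)
  have hδ : Tendsto δ atTop (𝓝 0) :=
    tendsto_const_nhds.div_atTop (tendsto_pow_atTop_atTop_of_one_lt one_lt_two)
  refine ⟨⋂ j, H j, (iInter_subset _ 0).trans (hHs 0),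
    (hHc 0).of_isClosed_subset (isClosed_iInter fun j => (hHc j).isClosed) (iInter_subset _ 0),
    ?_, fun n => (hHcont 0 n).mono (iInter_subset _ 0), ?_⟩
  · calc μ (s \ ⋂ j, H j) ≤ ∑' j, μ (s \ H j) := by
          rw [sdiff_iInter]; exact measure_iUnion_le _
      _ ≤ ∑' j, ENNReal.ofReal (δ j) := ENNReal.tsum_le_tsum fun j => (hHμ j).le
      _ = ENNReal.ofReal ε := by
          rw [← ENNReal.ofReal_tsum_of_nonneg (fun j => by positivity) (summable_geometric_two' ε),
            tsum_geometric_two']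
  · refine uniformCauchySeqOn_of_seminorm_lt (𝕜 := 𝕜) fun q hq r hr => ?_
    obtain ⟨j, hj⟩ := (hδ.eventually_lt_const hr).exists
    obtain ⟨N, hN⟩ := hHq j q hq
    rw [prod_atTop_atTop_eq]
    exact eventually_atTop_prod_self'.2 ⟨N, fun m hm n hn t ht =>
      (hN m hm n hn t (mem_iInter.1 ht j)).trans hj⟩

theorem stmt9_general {E : Type*} [AddCommGroup E] [Module ℝ E] [UniformSpace E]
    [IsUniformAddGroup E] [ContinuousSMul ℝ E] [LocallyConvexSpace ℝ E]
    (hcomplete : ∀ u : ℕ → E, CauchySeq u → ∃ x, Tendsto u atTop (𝓝 x))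
    (γ : ℕ → ℝ → E)
    (hcauchy : ∀ ε : ℝ, 0 < ε → ∃ H : Set ℝ, H ⊆ Icc 0 1 ∧ IsCompact H ∧
      volume (Icc (0:ℝ) 1 \ H) < ENNReal.ofReal ε ∧
      (∀ n, ContinuousOn (γ n) H) ∧
      ∀ q : Seminorm ℝ E, Continuous q → ∃ N : ℕ, ∀ m ≥ N, ∀ n ≥ N,
        ∀ t ∈ H, q (γ m t - γ n t) < ε) :
    ∃ γlim : ℝ → E,
      (∀ᵐ t ∂(volume.restrict (Icc (0:ℝ) 1)),
        Tendsto (fun n => γ n t) atTop (𝓝 (γlim t))) ∧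
      LusinMeasurable γlim := by
  set γlim : ℝ → E := fun t => limUnder atTop (γ · t)
  have hlim : ∀ A, UniformCauchySeqOn γ atTop A → ∀ t ∈ A,
      Tendsto (γ · t) atTop (𝓝 (γlim t)) :=
    fun A hA t ht => tendsto_nhds_limUnder (hcomplete _ (hA.cauchySeq ht))
  refine ⟨γlim, ae_restrict_of_forall_exists_diff_le measurableSet_Icc fun ε hε => ?_,
    fun ε hε => ?_⟩
  · obtain ⟨A, -, -, hAμ, -, hA⟩ := exists_isCompact_uniformCauchySeqOn hcauchy hε
    exact ⟨A, hAμ, hlim A hA⟩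
  · obtain ⟨A, hAs, hAc, hAμ, hAcont, hA⟩ := exists_isCompact_uniformCauchySeqOn hcauchy hε
    exact ⟨A, hAs, hAc, hAμ,
      (hA.tendstoUniformlyOn_of_tendsto (hlim A hA)).continuousOn
        (Eventually.of_forall hAcont).frequently⟩

theorem stmt9 {E : Type*} [AddCommGroup E] [Module ℝ E] [UniformSpace E]
    [IsUniformAddGroup E] [ContinuousSMul ℝ E] [LocallyConvexSpace ℝ E] [T2Space E]
    (hcomplete : ∀ u : ℕ → E, CauchySeq u → ∃ x, Tendsto u atTop (𝓝 x))
    (γ : ℕ → ℝ → E) (hγ : ∀ n, LusinMeasurable (γ n))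
    (hcauchy : ∀ ε : ℝ, 0 < ε → ∃ H : Set ℝ, H ⊆ Icc 0 1 ∧ IsCompact H ∧
      volume (Icc (0:ℝ) 1 \ H) < ENNReal.ofReal ε ∧
      (∀ n, ContinuousOn (γ n) H) ∧
      ∀ q : Seminorm ℝ E, Continuous q → ∃ N : ℕ, ∀ m ≥ N, ∀ n ≥ N,
        ∀ t ∈ H, q (γ m t - γ n t) < ε) :
    ∃ γlim : ℝ → E,
      (∀ᵐ t ∂(volume.restrict (Icc (0:ℝ) 1)),
        Tendsto (fun n => γ n t) atTop (𝓝 (γlim t))) ∧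
      LusinMeasurable γlim :=
  stmt9_general hcomplete γ hcauchy
end

section
/- Let E = ℝ^ℝ with the product topology and γₙ : [0,1] → E, γₙ(t)(x) = max{1 − n|x − t|, 0}. Then for every x₀ ∈ ℝ and 1 ≤ p < ∞, ∫₀¹ |γₙ(t)(x₀)|^p dt ≤ 2/n; hence γₙ → 0 in L^p([0,1], E), even though the pointwise limit γ(t) = δ_t (the indicator of {t}) differs from 0 at every t ∈ [0,1]. -/
open MeasureTheory Set Filter Topology

/-! Each γₙ(·)(x₀) is a tent of height 1 supported on the interval of radius 1/n about x₀, so its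
`p`-th power integrates to at most 2/n. Pointwise, however, γₙ(t)(x) is 1 at x = t and vanishes
as soon as n|x - t| ≥ 1, so γₙ(t) → δ_t in the product topology. -/

noncomputable def tent (c y : ℝ) : ℝ := max (1 - c * |y|) 0

lemma tent_zero_right (c : ℝ) : tent c 0 = 1 := by simp [tent]

lemma abs_tent_le_one {c : ℝ} (hc : 0 ≤ c) (y : ℝ) : |tent c y| ≤ 1 := by
  rw [abs_of_nonneg (le_max_right _ _)]
  exact max_le (sub_le_self _ (mul_nonneg hc (abs_nonneg y))) zero_le_one

lemma tent_eq_zero_of_one_le_mul_abs {c y : ℝ} (h : 1 ≤ c * |y|) : tent c y = 0 :=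
  max_eq_right (by linarith)

lemma tendsto_tent (y : ℝ) :
    Tendsto (fun c => tent c y) atTop (𝓝 (if y = 0 then 1 else 0)) := by
  by_cases hy : y = 0
  · simp [hy, tent_zero_right]
  rw [if_neg hy]
  refine tendsto_const_nhds.congr' ?_
  filter_upwards [eventually_ge_atTop |y|⁻¹] with c hc
  have hy' : 0 < |y| := abs_pos.2 hy
  rw [inv_le_iff_one_le_mul₀' hy', mul_comm] at hc
  exact (tent_eq_zero_of_one_le_mul_abs hc).symm

lemma lintegral_ofReal_abs_rpow_le_measure {α : Type*} [MeasurableSpace α] (μ : Measure α)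
    {f : α → ℝ} {s : Set α} (hs : MeasurableSet s) {p : ℝ} (hp : 0 < p)
    (hf : ∀ x, |f x| ≤ 1) (hfs : ∀ x ∉ s, f x = 0) :
    ∫⁻ x, ENNReal.ofReal (|f x| ^ p) ∂μ ≤ μ s := by
  calc ∫⁻ x, ENNReal.ofReal (|f x| ^ p) ∂μ ≤ ∫⁻ x, s.indicator 1 x ∂μ := by
        refine lintegral_mono fun x => ?_
        by_cases hx : x ∈ s
        · rw [indicator_of_mem hx, Pi.one_apply, ENNReal.ofReal_le_one]
          exact Real.rpow_le_one (abs_nonneg _) (hf x) hp.le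
        · simp [hfs x hx, Real.zero_rpow hp.ne']
    _ = μ s := lintegral_indicator_one hs

lemma lintegral_tent_rpow_le {c : ℝ} (hc : 0 < c) (x₀ : ℝ) {p : ℝ} (hp : 0 < p) :
    ∫⁻ t, ENNReal.ofReal (|tent c (x₀ - t)| ^ p) ≤ ENNReal.ofReal (2 / c) := by
  have hsupp : ∀ t ∉ Metric.closedBall x₀ c⁻¹, tent c (x₀ - t) = 0 := fun t ht => by
    rw [Metric.mem_closedBall, not_le, Real.dist_eq, abs_sub_comm,
      inv_lt_iff_one_lt_mul₀' hc] at ht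
    exact tent_eq_zero_of_one_le_mul_abs ht.le
  calc ∫⁻ t, ENNReal.ofReal (|tent c (x₀ - t)| ^ p)
      ≤ volume (Metric.closedBall x₀ c⁻¹) :=
        lintegral_ofReal_abs_rpow_le_measure volume Metric.isClosed_closedBall.measurableSet hp
          (fun t => abs_tent_le_one hc.le _) hsupp
    _ = ENNReal.ofReal (2 / c) := by rw [Real.volume_closedBall, div_eq_mul_inv]

theorem stmt15 (γ : ℕ → ℝ → (ℝ → ℝ))
    (hdef : ∀ n t x, γ n t x = max (1 - (n : ℝ) * |x - t|) 0)
    (p : ℝ) (hp : 1 ≤ p) :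
    (∀ x₀ : ℝ, ∀ n : ℕ, 0 < n →
      ∫⁻ t in Icc (0:ℝ) 1, ENNReal.ofReal (|γ n t x₀| ^ p) ≤
        ENNReal.ofReal (2 / n)) ∧
    (∀ x₀ : ℝ, Tendsto
      (fun n : ℕ => ∫⁻ t in Icc (0:ℝ) 1, ENNReal.ofReal (|γ n t x₀| ^ p))
      atTop (𝓝 0)) ∧
    (∀ t ∈ Icc (0:ℝ) 1,
      Tendsto (fun n => γ n t) atTop (𝓝 (fun x => if x = t then (1:ℝ) else 0)) ∧
      (fun x => if x = t then (1:ℝ) else 0) ≠ (0 : ℝ → ℝ)) := by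
  obtain rfl : γ = fun (n : ℕ) t x => tent n (x - t) := funext₃ hdef
  have bound : ∀ x₀ : ℝ, ∀ n : ℕ, 0 < n →
      ∫⁻ t in Icc (0:ℝ) 1, ENNReal.ofReal (|tent n (x₀ - t)| ^ p) ≤ ENNReal.ofReal (2 / n) :=
    fun x₀ n hn => (setLIntegral_le_lintegral _ _).trans
      (lintegral_tent_rpow_le (Nat.cast_pos.2 hn) x₀ (by linarith))
  refine ⟨bound, fun x₀ => ?_, fun t _ => ⟨?_, fun h => by simpa using congrFun h t⟩⟩
  · have h2n : Tendsto (fun n : ℕ => ENNReal.ofReal (2 / n)) atTop (𝓝 0) := by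
      simpa using ENNReal.tendsto_ofReal (tendsto_const_div_atTop_nhds_zero_nat 2)
    exact tendsto_of_tendsto_of_tendsto_of_le_of_le' tendsto_const_nhds h2n
      (Eventually.of_forall fun _ => zero_le)
      ((eventually_gt_atTop 0).mono fun n hn => bound x₀ n hn)
  · exact tendsto_pi_nhds.2 fun x => by
      simpa [sub_eq_zero, Function.comp_def] using (tendsto_tent (x - t)).comp tendsto_natCast_atTop_atTop
end

section
/- Let E be a sequentially complete Hausdorff real locally convex space, 1 ≤ p < ∞, and γ ∈ L^p([0,1], E). For n ∈ ℕ let I_{n,j} = [(j−1)/2ⁿ, j/2ⁿ) for j = 1, ..., 2ⁿ, and define the simple function γₙ(t) = ∑_{j=1}^{2ⁿ} (2ⁿ ∫_{I_{n,j}} γ(s) ds) · χ_{I_{n,j}}(t), using the weak integral. Then γₙ → γ in L^p([0,1], E), i.e. ‖γ − γₙ‖_{p,q} → 0 for every continuous seminorm q. -/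
open MeasureTheory Set Filter Topology

/-!
Fix a continuous seminorm `q`. The completion `F` of `E` for `q` is a Banach space, and the
canonical map `π : E → F` is continuous, linear and satisfies `‖π x‖ = q x`. Then `π ∘ γ` lies in
the Bochner space `L^p([0,1], F)`, Hahn–Banach in `F` shows that `π` maps the weak averages `z n j`
to the Bochner averages of `π ∘ γ`, and `q (γ - γₙ) = ‖π ∘ γ - (π ∘ γ)ₙ‖`. This reduces the theorem
to Banach-valued functions, where it is the classical argument: averaging over the dyadic
intervals of generation `n` is a contraction of `L^p` (Jensen on each interval), it converges
uniformly on continuous functions, and continuous functions are dense in `L^p`.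
-/

open scoped ENNReal Function

theorem enorm_setAverage_rpow_mul_le {α F : Type*} [MeasurableSpace α] [NormedAddCommGroup F]
    [NormedSpace ℝ F] {μ : Measure α} {s : Set α} {f : α → F} {r : ℝ} (hr : 1 ≤ r)
    (hs : μ s ≠ ∞) (hf : AEStronglyMeasurable f (μ.restrict s)) :
    ‖⨍ x in s, f x ∂μ‖ₑ ^ r * μ s ≤ ∫⁻ x in s, ‖f x‖ₑ ^ r ∂μ := by
  rcases eq_or_ne (μ s) 0 with h0 | h0
  · simp [h0]
  have : IsFiniteMeasure (μ.restrict s) := isFiniteMeasure_restrict.2 hs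
  have : NeZero (μ.restrict s) := ⟨by simpa using h0⟩
  set ν := (μ.restrict s univ)⁻¹ • μ.restrict s
  have hν : ‖⨍ x in s, f x ∂μ‖ₑ ≤ eLpNorm' f r ν :=
    calc ‖⨍ x in s, f x ∂μ‖ₑ ≤ ∫⁻ x, ‖f x‖ₑ ∂ν := enorm_integral_le_lintegral_enorm f
      _ = eLpNorm' f 1 ν := by simp [eLpNorm'_eq_lintegral_enorm]
      _ ≤ eLpNorm' f r ν :=
        eLpNorm'_le_eLpNorm'_of_exponent_le one_pos hr ν (hf.smul_measure _)
  calc ‖⨍ x in s, f x ∂μ‖ₑ ^ r * μ s ≤ eLpNorm' f r ν ^ r * μ s := by gcongr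
    _ = ∫⁻ x in s, ‖f x‖ₑ ^ r ∂μ := by
      rw [← lintegral_rpow_enorm_eq_rpow_eLpNorm' (one_pos.trans_le hr), lintegral_smul_measure,
        Measure.restrict_apply_univ, smul_eq_mul, mul_comm, ← mul_assoc,
        ENNReal.mul_inv_cancel h0 hs, one_mul]

theorem lintegral_rpow_enorm_eq_eLpNorm_ofReal_rpow {α ε : Type*} [MeasurableSpace α] [ENorm ε]
    {μ : Measure α} (f : α → ε) {p : ℝ} (hp : 0 < p) :
    ∫⁻ x, ‖f x‖ₑ ^ p ∂μ = eLpNorm f (ENNReal.ofReal p) μ ^ p := by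
  rw [eLpNorm_eq_eLpNorm' (by simpa using hp) ENNReal.ofReal_ne_top, ENNReal.toReal_ofReal hp.le,
    lintegral_rpow_enorm_eq_rpow_eLpNorm' hp]

def dyadicInterval (n j : ℕ) : Set ℝ := Ico ((j : ℝ) / 2 ^ n) ((j + 1 : ℝ) / 2 ^ n)

theorem mem_dyadicInterval_iff {n j : ℕ} {t : ℝ} :
    t ∈ dyadicInterval n j ↔ 0 ≤ t ∧ ⌊2 ^ n * t⌋₊ = j := by
  have h2n : (0 : ℝ) < 2 ^ n := by positivity
  constructor
  · rintro ⟨hl, hr⟩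
    have ht : 0 ≤ t := (div_nonneg (Nat.cast_nonneg j) h2n.le).trans hl
    refine ⟨ht, (Nat.floor_eq_iff (by positivity)).2 ⟨?_, ?_⟩⟩
    · rw [div_le_iff₀ h2n] at hl; linarith
    · rw [lt_div_iff₀ h2n] at hr; linarith
  · rintro ⟨ht, rfl⟩
    obtain ⟨hl, hr⟩ := (Nat.floor_eq_iff (by positivity : 0 ≤ 2 ^ n * t)).1 rfl
    exact ⟨by rw [div_le_iff₀ h2n]; linarith, by rw [lt_div_iff₀ h2n]; linarith⟩

theorem measurableSet_dyadicInterval (n j : ℕ) : MeasurableSet (dyadicInterval n j) :=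
  measurableSet_Ico

theorem volume_dyadicInterval (n j : ℕ) : volume (dyadicInterval n j) = (2 ^ n)⁻¹ := by
  rw [dyadicInterval, Real.volume_Ico, show ((j : ℝ) + 1) / 2 ^ n - j / 2 ^ n = (2 ^ n)⁻¹ by ring,
    ENNReal.ofReal_inv_of_pos (by positivity)]
  norm_num

theorem pairwise_disjoint_dyadicInterval (n : ℕ) :
    Pairwise (Disjoint on dyadicInterval n) := fun _ _ hne =>
  disjoint_left.2 fun _ h h' =>
    hne ((mem_dyadicInterval_iff.1 h).2.symm.trans (mem_dyadicInterval_iff.1 h').2)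

theorem biUnion_dyadicInterval (n : ℕ) :
    ⋃ j ∈ Finset.range (2 ^ n), dyadicInterval n j = Ico 0 1 := by
  ext t
  simp only [mem_iUnion, mem_dyadicInterval_iff, Finset.mem_range, exists_prop, mem_Ico]
  constructor
  · rintro ⟨j, hj, ht, rfl⟩
    refine ⟨ht, ?_⟩
    have := (Nat.floor_lt (by positivity)).1 hj
    push_cast at this
    nlinarith [pow_pos (two_pos (α := ℝ)) n]
  · rintro ⟨ht, ht1⟩
    refine ⟨_, ?_, ht, rfl⟩
    rw [Nat.floor_lt (by positivity)]
    push_cast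
    nlinarith [pow_pos (two_pos (α := ℝ)) n]

theorem dist_lt_of_mem_dyadicInterval {n j : ℕ} {s t : ℝ} (hs : s ∈ dyadicInterval n j)
    (ht : t ∈ dyadicInterval n j) : dist s t < (2 ^ n)⁻¹ := by
  obtain ⟨hs1, hs2⟩ := hs
  obtain ⟨ht1, ht2⟩ := ht
  have : ((j : ℝ) + 1) / 2 ^ n - j / 2 ^ n = (2 ^ n)⁻¹ := by ring
  rw [Real.dist_eq, abs_sub_lt_iff]
  constructor <;> linarith

theorem volume_dyadicInterval_ne_zero (n j : ℕ) : volume (dyadicInterval n j) ≠ 0 := by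
  simp [volume_dyadicInterval]

theorem volume_dyadicInterval_ne_top (n j : ℕ) : volume (dyadicInterval n j) ≠ ∞ := by
  simp [volume_dyadicInterval]

theorem dyadicInterval_subset_Ico {n j : ℕ} (hj : j < 2 ^ n) : dyadicInterval n j ⊆ Ico 0 1 :=
  biUnion_dyadicInterval n ▸ subset_biUnion_of_mem (u := dyadicInterval n) (Finset.mem_range.2 hj)

section DyadicAverage

variable {F : Type*} [NormedAddCommGroup F] [NormedSpace ℝ F]

theorem setAverage_dyadicInterval (n j : ℕ) (f : ℝ → F) :
    ⨍ s in dyadicInterval n j, f s = (2 : ℝ) ^ n • ∫ s in dyadicInterval n j, f s := by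
  rw [setAverage_eq, measureReal_def, volume_dyadicInterval, ENNReal.toReal_inv]
  simp

noncomputable def dyadicAverage (n : ℕ) (f : ℝ → F) (t : ℝ) : F :=
  ∑ j ∈ Finset.range (2 ^ n),
    (dyadicInterval n j).indicator (fun _ => ⨍ s in dyadicInterval n j, f s) t

theorem dyadicAverage_eq_of_mem {n j : ℕ} (hj : j < 2 ^ n) (f : ℝ → F) {t : ℝ}
    (ht : t ∈ dyadicInterval n j) : dyadicAverage n f t = ⨍ s in dyadicInterval n j, f s := by
  rw [dyadicAverage, Finset.sum_eq_single_of_mem j (Finset.mem_range.2 hj), indicator_of_mem ht]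
  exact fun j' _ hne => indicator_of_notMem
    (disjoint_left.1 (pairwise_disjoint_dyadicInterval n hne.symm) ht) _

theorem stronglyMeasurable_dyadicAverage (n : ℕ) (f : ℝ → F) :
    StronglyMeasurable (dyadicAverage n f) :=
  Finset.stronglyMeasurable_fun_sum _ fun j _ =>
    stronglyMeasurable_const.indicator (measurableSet_dyadicInterval n j)

theorem dyadicAverage_sub {f g : ℝ → F} (hf : IntegrableOn f (Ico 0 1))
    (hg : IntegrableOn g (Ico 0 1)) (n : ℕ) :
    dyadicAverage n (f - g) = dyadicAverage n f - dyadicAverage n g := by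
  ext t
  simp only [dyadicAverage, Pi.sub_apply, ← Finset.sum_sub_distrib]
  refine Finset.sum_congr rfl fun j hj => ?_
  have hI := dyadicInterval_subset_Ico (Finset.mem_range.1 hj)
  rw [setAverage_eq, setAverage_eq, setAverage_eq, integral_sub (hf.mono_set hI) (hg.mono_set hI),
    smul_sub]
  exact congrFun (indicator_sub _ _ _) t

theorem map_sum_indicator_dyadicInterval {E : Type*} [AddCommGroup E] [Module ℝ E]
    (π : E →ₗ[ℝ] F) {n : ℕ} {f : ℝ → F} {c : ℕ → E}
    (hc : ∀ j < 2 ^ n, π (c j) = ⨍ s in dyadicInterval n j, f s) (t : ℝ) :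
    π (∑ j ∈ Finset.range (2 ^ n), (dyadicInterval n j).indicator (fun _ => c j) t) =
      dyadicAverage n f t := by
  rw [map_sum, dyadicAverage]
  refine Finset.sum_congr rfl fun j hj => ?_
  rw [map_indicator, Function.comp_def, hc j (Finset.mem_range.1 hj)]

theorem eLpNorm_dyadicAverage_le {p : ℝ≥0∞} (hp1 : 1 ≤ p) (hp : p ≠ ∞) {f : ℝ → F}
    (hf : AEStronglyMeasurable f (volume.restrict (Ico 0 1))) (n : ℕ) :
    eLpNorm (dyadicAverage n f) p (volume.restrict (Ico 0 1)) ≤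
      eLpNorm f p (volume.restrict (Ico 0 1)) := by
  have hr : 1 ≤ p.toReal := by simpa using ENNReal.toReal_mono hp hp1
  rw [eLpNorm_eq_lintegral_rpow_enorm_toReal (one_pos.trans_le hp1).ne' hp,
    eLpNorm_eq_lintegral_rpow_enorm_toReal (one_pos.trans_le hp1).ne' hp]
  gcongr ?_ ^ _
  have hdisj : (Finset.range (2 ^ n) : Set ℕ).PairwiseDisjoint (dyadicInterval n) :=
    fun _ _ _ _ hne => pairwise_disjoint_dyadicInterval n hne
  rw [← biUnion_dyadicInterval n,
    lintegral_biUnion_finset hdisj fun j _ => measurableSet_dyadicInterval n j,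
    lintegral_biUnion_finset hdisj fun j _ => measurableSet_dyadicInterval n j]
  refine Finset.sum_le_sum fun j hj => ?_
  have hI := dyadicInterval_subset_Ico (Finset.mem_range.1 hj)
  calc ∫⁻ t in dyadicInterval n j, ‖dyadicAverage n f t‖ₑ ^ p.toReal
      = ∫⁻ _ in dyadicInterval n j, ‖⨍ s in dyadicInterval n j, f s‖ₑ ^ p.toReal :=
        setLIntegral_congr_fun (measurableSet_dyadicInterval n j) fun t ht => by
          rw [dyadicAverage_eq_of_mem (Finset.mem_range.1 hj) f ht]
    _ = ‖⨍ s in dyadicInterval n j, f s‖ₑ ^ p.toReal * volume (dyadicInterval n j) :=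
        setLIntegral_const _ _
    _ ≤ ∫⁻ t in dyadicInterval n j, ‖f t‖ₑ ^ p.toReal :=
        enorm_setAverage_rpow_mul_le hr (volume_dyadicInterval_ne_top n j) (hf.mono_set hI)

theorem tendsto_eLpNorm_sub_dyadicAverage_of_continuousOn [CompleteSpace F] {φ : ℝ → F}
    (hφ : ContinuousOn φ (Icc 0 1)) (p : ℝ≥0∞) :
    Tendsto (fun n => eLpNorm (φ - dyadicAverage n φ) p (volume.restrict (Ico 0 1)))
      atTop (𝓝 0) := by
  rw [ENNReal.tendsto_nhds_zero]
  intro ε hε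
  obtain ⟨η, -, hη, hηε⟩ := ENNReal.lt_iff_exists_real_btwn.1 hε
  rw [ENNReal.ofReal_pos] at hη
  obtain ⟨δ, hδ, hφδ⟩ := Metric.uniformContinuousOn_iff.1
    (isCompact_Icc.uniformContinuousOn_of_continuous hφ) η hη
  obtain ⟨N, hN⟩ := exists_pow_lt_of_lt_one hδ (by norm_num : (2⁻¹ : ℝ) < 1)
  filter_upwards [eventually_ge_atTop N] with n hn
  have hbound : ∀ t ∈ Ico (0 : ℝ) 1, ‖(φ - dyadicAverage n φ) t‖ ≤ η := by
    intro t ht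
    rw [← biUnion_dyadicInterval n] at ht
    obtain ⟨j, hj, htj⟩ := mem_iUnion₂.1 ht
    have hI := (dyadicInterval_subset_Ico (Finset.mem_range.1 hj)).trans Ico_subset_Icc_self
    rw [Pi.sub_apply, dyadicAverage_eq_of_mem (Finset.mem_range.1 hj) φ htj, ← dist_eq_norm,
      dist_comm]
    refine (convex_closedBall (φ t) η).set_average_mem Metric.isClosed_closedBall
      (volume_dyadicInterval_ne_zero n j) (volume_dyadicInterval_ne_top n j) ?_
      ((hφ.integrableOn_compact isCompact_Icc).mono_set hI)
    filter_upwards [ae_restrict_mem (measurableSet_dyadicInterval n j)] with s hs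
    refine (hφδ s (hI hs) t (hI htj) ((dist_lt_of_mem_dyadicInterval hs htj).trans_le ?_)).le
    calc ((2 : ℝ) ^ n)⁻¹ ≤ (2 ^ N)⁻¹ := inv_anti₀ (by positivity) (pow_le_pow_right₀ one_le_two hn)
      _ ≤ δ := by rw [← inv_pow]; exact hN.le
  calc eLpNorm (φ - dyadicAverage n φ) p (volume.restrict (Ico 0 1))
      ≤ volume.restrict (Ico (0 : ℝ) 1) univ ^ p.toReal⁻¹ * ENNReal.ofReal η :=
        eLpNorm_le_of_ae_bound (ae_restrict_of_forall_mem measurableSet_Ico hbound)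
    _ ≤ ε := by simpa using hηε.le

theorem tendsto_eLpNorm_sub_dyadicAverage [CompleteSpace F] {p : ℝ≥0∞} (hp1 : 1 ≤ p)
    (hp : p ≠ ∞) {f : ℝ → F} (hf : MemLp f p (volume.restrict (Icc 0 1))) :
    Tendsto (fun n => eLpNorm (f - dyadicAverage n f) p (volume.restrict (Icc 0 1)))
      atTop (𝓝 0) := by
  rw [← Measure.restrict_congr_set Ico_ae_eq_Icc] at hf ⊢
  rw [ENNReal.tendsto_nhds_zero]
  intro ε hε
  have hε3 : ε / 3 ≠ 0 := (ENNReal.div_pos hε.ne' ENNReal.ofNat_ne_top).ne'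
  obtain ⟨φ, hfφ, hφ⟩ := hf.exists_boundedContinuous_eLpNorm_sub_le hp hε3
  filter_upwards [ENNReal.tendsto_nhds_zero.1 (tendsto_eLpNorm_sub_dyadicAverage_of_continuousOn
    φ.continuous.continuousOn p) (ε / 3) (pos_iff_ne_zero.2 hε3)] with n hn
  set φ : ℝ → F := ⇑φ
  have hsplit : f - dyadicAverage n f =
      (f - φ) + (φ - dyadicAverage n φ) + dyadicAverage n (φ - f) := by
    rw [dyadicAverage_sub (hφ.integrable hp1) (hf.integrable hp1)]
    abel
  have hmeas := hf.aestronglyMeasurable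
  have hφmeas := hφ.aestronglyMeasurable
  calc eLpNorm (f - dyadicAverage n f) p (volume.restrict (Ico 0 1))
      ≤ eLpNorm (f - φ) p (volume.restrict (Ico 0 1)) +
          eLpNorm (φ - dyadicAverage n φ) p (volume.restrict (Ico 0 1)) +
          eLpNorm (dyadicAverage n (φ - f)) p (volume.restrict (Ico 0 1)) := by
        have hAφ : AEStronglyMeasurable (dyadicAverage n φ) (volume.restrict (Ico 0 1)) :=
          (stronglyMeasurable_dyadicAverage n φ).aestronglyMeasurable
        have hAφf : AEStronglyMeasurable (dyadicAverage n (φ - f)) (volume.restrict (Ico 0 1)) :=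
          (stronglyMeasurable_dyadicAverage n _).aestronglyMeasurable
        rw [hsplit]
        refine (eLpNorm_add_le ((hmeas.sub hφmeas).add (hφmeas.sub hAφ)) hAφf hp1).trans ?_
        gcongr
        exact eLpNorm_add_le (hmeas.sub hφmeas) (hφmeas.sub hAφ) hp1
    _ ≤ ε / 3 + ε / 3 + ε / 3 := by
        gcongr
        rw [← eLpNorm_neg, neg_sub] at hfφ
        exact (eLpNorm_dyadicAverage_le hp1 hp (hφmeas.sub hmeas) n).trans hfφ
    _ = ε := ENNReal.add_thirds ε

end DyadicAverage

theorem ContinuousLinearMap.eq_setAverage_of_forall_dual {X E F : Type*} [MeasurableSpace X]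
    {μ : Measure X} [AddCommGroup E] [Module ℝ E] [TopologicalSpace E] [NormedAddCommGroup F]
    [NormedSpace ℝ F] [CompleteSpace F] (π : E →L[ℝ] F) {s : Set X} {g : X → E} {x : E}
    (hg : IntegrableOn (fun t => π (g t)) s μ)
    (hx : ∀ f : E →L[ℝ] ℝ, f x = ⨍ t in s, f (g t) ∂μ) :
    π x = ⨍ t in s, π (g t) ∂μ := by
  refine (SeparatingDual.eq_iff_forall_dual_eq (R := ℝ)).2 fun f => ?_
  rw [setAverage_eq, map_smul, ← f.integral_comp_comm hg]
  exact (hx (f.comp π)).trans (setAverage_eq _ _ _)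

theorem LusinMeasurable.comp {E F : Type*} [TopologicalSpace E] [TopologicalSpace F]
    {γ : ℝ → E} (hγ : LusinMeasurable γ) {g : E → F} (hg : Continuous g) :
    LusinMeasurable (g ∘ γ) := fun ε hε =>
  (hγ ε hε).imp fun _ ⟨hsub, hcomp, hvol, hcont⟩ => ⟨hsub, hcomp, hvol, hg.comp_continuousOn hcont⟩

theorem LusinMeasurable.aestronglyMeasurable {E : Type*} [TopologicalSpace E]
    [TopologicalSpace.PseudoMetrizableSpace E] {γ : ℝ → E} (hγ : LusinMeasurable γ) :
    AEStronglyMeasurable γ (volume.restrict (Icc 0 1)) := by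
  choose K _ hcomp hvol hcont using fun m : ℕ => hγ (1 / (m + 1)) Nat.one_div_pos_of_nat
  have hlim : Tendsto (fun m : ℕ => ENNReal.ofReal (1 / (m + 1))) atTop (𝓝 0) := by
    simpa using ENNReal.tendsto_ofReal tendsto_one_div_add_atTop_nhds_zero_nat
  have hnull : volume (Icc (0 : ℝ) 1 \ ⋃ m, K m) = 0 := nonpos_iff_eq_zero.1 <|
    ge_of_tendsto' hlim fun m => (measure_mono (sdiff_subset_sdiff_right (subset_iUnion K m))).trans
      (hvol m)
  exact (aestronglyMeasurable_iUnion_iff.2 fun m => (hcont m).aestronglyMeasurable_of_isCompact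
    (hcomp m) (hcomp m).measurableSet).mono_measure (Measure.restrict_mono_ae (ae_le_set.2 hnull))

section SeminormCompletion

variable {E : Type*} [AddCommGroup E] [Module ℝ E]

/-- A type synonym, so that the seminormed structure of `q` does not clash with the topology
of `E`. -/
def WithSeminorm (_q : Seminorm ℝ E) : Type _ := E

variable (q : Seminorm ℝ E)

noncomputable instance : SeminormedAddCommGroup (WithSeminorm q) :=
  q.toAddGroupSeminorm.toSeminormedAddCommGroup

instance : Module ℝ (WithSeminorm q) := inferInstanceAs (Module ℝ E)

noncomputable instance : NormedSpace ℝ (WithSeminorm q) := ⟨fun c x => (map_smul_eq_mul q c x).le⟩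

noncomputable def Seminorm.toCompletion : E →ₗ[ℝ] UniformSpace.Completion (WithSeminorm q) :=
  UniformSpace.Completion.toComplₗᵢ.toLinearMap.comp (LinearMap.id : E →ₗ[ℝ] WithSeminorm q)

theorem Seminorm.norm_toCompletion (x : E) : ‖q.toCompletion x‖ = q x :=
  UniformSpace.Completion.norm_coe (E := WithSeminorm q) x

theorem Seminorm.enorm_toCompletion (x : E) : ‖q.toCompletion x‖ₑ = ENNReal.ofReal (q x) := by
  rw [← ofReal_norm, q.norm_toCompletion]

theorem Seminorm.lintegral_ofReal_rpow_eq {α : Type*} [MeasurableSpace α] {μ : Measure α}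
    (g : α → E) {p : ℝ} (hp : 0 < p) :
    ∫⁻ t, ENNReal.ofReal (q (g t) ^ p) ∂μ =
      eLpNorm (q.toCompletion ∘ g) (ENNReal.ofReal p) μ ^ p := by
  simp only [← lintegral_rpow_enorm_eq_eLpNorm_ofReal_rpow _ hp, Function.comp_apply,
    q.enorm_toCompletion, ENNReal.ofReal_rpow_of_nonneg (apply_nonneg q _) hp.le]

variable [UniformSpace E] [IsUniformAddGroup E] {q}

theorem Seminorm.continuous_toCompletion (hq : Continuous q) : Continuous q.toCompletion := by
  refine continuous_of_continuousAt_zero q.toCompletion ?_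
  rw [ContinuousAt, map_zero]
  refine tendsto_zero_iff_norm_tendsto_zero.2 ?_
  simpa [Seminorm.norm_toCompletion] using hq.tendsto 0

theorem Seminorm.memLp_toCompletion_comp (hq : Continuous q) {γ : ℝ → E}
    (hγ : LusinMeasurable γ) {p : ℝ} (hp : 0 < p)
    (hLp : ∫⁻ t in Icc (0 : ℝ) 1, ENNReal.ofReal (q (γ t) ^ p) < ⊤) :
    MemLp (q.toCompletion ∘ γ) (ENNReal.ofReal p) (volume.restrict (Icc 0 1)) := by
  refine ⟨(hγ.comp (q.continuous_toCompletion hq)).aestronglyMeasurable, ?_⟩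
  rwa [← ENNReal.rpow_lt_top_iff_of_pos hp, ← q.lintegral_ofReal_rpow_eq _ hp]

end SeminormCompletion

theorem stmt18_general {E : Type*} [AddCommGroup E] [Module ℝ E] [UniformSpace E]
    [IsUniformAddGroup E]
    (p : ℝ) (hp : 1 ≤ p)
    (γ : ℝ → E) (hγ : LusinMeasurable γ)
    (hLp : ∀ q : Seminorm ℝ E, Continuous q →
      ∫⁻ t in Icc (0:ℝ) 1, ENNReal.ofReal (q (γ t) ^ p) < ⊤)
    (z : ℕ → ℕ → E)
    (hz : ∀ (n j : ℕ) (f : E →L[ℝ] ℝ),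
      f (z n j) = 2 ^ n * ∫ t in Ico ((j : ℝ) / 2 ^ n) ((j + 1 : ℝ) / 2 ^ n), f (γ t))
    (γn : ℕ → ℝ → E)
    (hγn : ∀ n, γn n = fun t => ∑ j ∈ Finset.range (2 ^ n),
      (Ico ((j : ℝ) / 2 ^ n) ((j + 1 : ℝ) / 2 ^ n)).indicator (fun _ => z n j) t) :
    ∀ q : Seminorm ℝ E, Continuous q →
      Tendsto (fun n => ∫⁻ t in Icc (0:ℝ) 1,
          ENNReal.ofReal (q (γ t - γn n t) ^ p)) atTop (𝓝 0) := by
  intro q hq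
  let π : E →L[ℝ] UniformSpace.Completion (WithSeminorm q) :=
    ⟨q.toCompletion, q.continuous_toCompletion hq⟩
  have hp0 : 0 < p := one_pos.trans_le hp
  have hf : MemLp (π ∘ γ) (ENNReal.ofReal p) (volume.restrict (Icc 0 1)) :=
    q.memLp_toCompletion_comp hq hγ hp0 (hLp q hq)
  have hz' : ∀ n j, j < 2 ^ n → π (z n j) = ⨍ s in dyadicInterval n j, π (γ s) := by
    intro n j hj
    have hI := (dyadicInterval_subset_Ico hj).trans Ico_subset_Icc_self
    refine π.eq_setAverage_of_forall_dual
      (IntegrableOn.mono_set (hf.integrable (by simpa using hp)) hI) fun f => ?_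
    rw [setAverage_dyadicInterval, smul_eq_mul]
    exact hz n j f
  have hγn' : ∀ n, π ∘ (γ - γn n) = π ∘ γ - dyadicAverage n (π ∘ γ) := fun n => funext fun t => by
    rw [Function.comp_apply, Pi.sub_apply, map_sub, hγn]
    exact congrArg _ (map_sum_indicator_dyadicInterval π.toLinearMap (hz' n) t)
  have hlim := ((ENNReal.continuous_rpow_const (y := p)).tendsto 0).comp
    (tendsto_eLpNorm_sub_dyadicAverage (by simpa using hp) ENNReal.ofReal_ne_top hf)
  rw [ENNReal.zero_rpow_of_pos hp0] at hlim
  refine hlim.congr fun n => ?_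
  rw [Function.comp_apply, ← hγn' n]
  exact (q.lintegral_ofReal_rpow_eq (γ - γn n) hp0).symm

/-- Dyadic averages of an `L^p` function converge to it in `L^p([0,1],E)`.
Here `z n j` is the weak (Pettis) average of `γ` over the dyadic interval
`[j/2ⁿ, (j+1)/2ⁿ)`, and `γₙ` is the corresponding dyadic simple function. -/
theorem stmt18 {E : Type*} [AddCommGroup E] [Module ℝ E] [UniformSpace E]
    [IsUniformAddGroup E] [ContinuousSMul ℝ E] [LocallyConvexSpace ℝ E] [T2Space E]
    (hcomplete : ∀ u : ℕ → E, CauchySeq u → ∃ x, Tendsto u atTop (𝓝 x))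
    (p : ℝ) (hp : 1 ≤ p)
    (γ : ℝ → E) (hγ : LusinMeasurable γ)
    (hLp : ∀ q : Seminorm ℝ E, Continuous q →
      ∫⁻ t in Icc (0:ℝ) 1, ENNReal.ofReal (q (γ t) ^ p) < ⊤)
    (hint : ∀ f : E →L[ℝ] ℝ, IntegrableOn (fun t => f (γ t)) (Icc (0:ℝ) 1))
    (z : ℕ → ℕ → E)
    (hz : ∀ (n j : ℕ) (f : E →L[ℝ] ℝ),
      f (z n j) = 2 ^ n * ∫ t in Ico ((j : ℝ) / 2 ^ n) ((j + 1 : ℝ) / 2 ^ n), f (γ t))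
    (γn : ℕ → ℝ → E)
    (hγn : ∀ n, γn n = fun t => ∑ j ∈ Finset.range (2 ^ n),
      (Ico ((j : ℝ) / 2 ^ n) ((j + 1 : ℝ) / 2 ^ n)).indicator (fun _ => z n j) t) :
    ∀ q : Seminorm ℝ E, Continuous q →
      Tendsto (fun n => ∫⁻ t in Icc (0:ℝ) 1,
          ENNReal.ofReal (q (γ t - γn n t) ^ p)) atTop (𝓝 0) :=
  stmt18_general p hp γ hγ hLp z hz γn hγn
end
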